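/- Let P be a program over Σ, let χ ∈ {κ, HT}, let Π = P^χ ∪ P_g, and let M be an answer set of Π. Then AS(Π ∪ Π_M) = {M' ∈ AS(Π) : gap(M') ⊊ gap(M)}. -/
import Mathlib


namespace ASP

/-- A rule: head, positive body, negative body (finite sets of atoms). -/
structure Rule (α : Type) where
  head : Finset α
  pos : Finset α
  neg : Finset α
deriving DecidableEq

/-- The extended propositional signature: original atoms of `Σ = σ`, the fresh
believed atoms `K a`, the fresh atoms `λ_{r,a}` (one for each rule `r` over `σ`
and each atom `a`, used for head atoms of `r`), and the fresh atoms `gap (K a)`. -/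
inductive Atom (σ : Type) where
  | base : σ → Atom σ
  | K : σ → Atom σ
  | lam : Rule σ → σ → Atom σ
  | gap : σ → Atom σ
deriving DecidableEq

/-- An interpretation `I` satisfies rule `r`. -/
def Rule.sat {α : Type} (I : Set α) (r : Rule α) : Prop :=
  ((↑r.pos ⊆ I) ∧ ∀ b ∈ r.neg, b ∉ I) → ∃ a ∈ r.head, a ∈ I

/-- `I` is a model of the program `P`. -/
def isModel {α : Type} (I : Set α) (P : Finset (Rule α)) : Prop :=
  ∀ r ∈ P, r.sat I

/-- `I` is a minimal model of `P`. -/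
def isMinModel {α : Type} (I : Set α) (P : Finset (Rule α)) : Prop :=
  isModel I P ∧ ∀ J : Set α, J ⊂ I → ¬ isModel J P

open Classical in
/-- The Gelfond-Lifschitz reduct `P^I`. -/
noncomputable def reduct {α : Type} (P : Finset (Rule α)) (I : Set α) :
    Finset (Rule α) :=
  (P.filter (fun r => ∀ b ∈ r.neg, b ∉ I)).image (fun r => ⟨r.head, r.pos, ∅⟩)

/-- The answer sets of `P`. -/
def AS {α : Type} (P : Finset (Rule α)) : Set (Set α) :=
  {I | isMinModel I (reduct P I)}

/-- The atoms occurring in a rule. -/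
def ruleAtoms {α : Type} [DecidableEq α] (r : Rule α) : Finset α :=
  r.head ∪ r.pos ∪ r.neg

/-- `At(P)`: the atoms occurring in a program. -/
def progAtoms {α : Type} [DecidableEq α] (P : Finset (Rule α)) : Finset α :=
  P.biUnion ruleAtoms

/-- Map a rule along an atom translation. -/
def mapRule {σ α : Type} [DecidableEq α] (f : σ → α) (r : Rule σ) : Rule α :=
  ⟨r.head.image f, r.pos.image f, r.neg.image f⟩

variable {σ : Type} [DecidableEq σ]

/-- The rules of `P^κ` produced for a single rule of `P`. -/
def kappaRule (r : Rule σ) : Finset (Rule (Atom σ)) :=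
  if r.neg = ∅ then {mapRule Atom.base r}
  else
    {⟨r.head.image (Atom.lam r) ∪ r.neg.image Atom.K, r.pos.image Atom.base, ∅⟩}
    ∪ r.head.image (fun a => ⟨{Atom.base a}, {Atom.lam r a}, ∅⟩)
    ∪ (r.head ×ˢ r.neg).image
        (fun p => ⟨∅, {Atom.lam r p.1, Atom.base p.2}, ∅⟩)
    ∪ (r.head ×ˢ r.head).image
        (fun p => ⟨{Atom.lam r p.1}, {Atom.base p.1, Atom.lam r p.2}, ∅⟩)

/-- The epistemic κ-transformation `P^κ`. -/
def kappa (P : Finset (Rule σ)) : Finset (Rule (Atom σ)) :=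
  P.biUnion kappaRule

/-- The epistemic HT-transformation `P^HT`. -/
def ht (P : Finset (Rule σ)) : Finset (Rule (Atom σ)) :=
  kappa P
  ∪ (progAtoms P).image (fun a => ⟨{Atom.K a}, {Atom.base a}, ∅⟩)
  ∪ P.image (fun r => ⟨(r.head ∪ r.neg).image Atom.K, r.pos.image Atom.K, ∅⟩)

/-- The choice `χ ∈ {κ, HT}` of epistemic transformation. -/
inductive Chi | kappa | ht

/-- `P^χ` for `χ ∈ {κ, HT}`. -/
def epi (χ : Chi) (P : Finset (Rule σ)) : Finset (Rule (Atom σ)) :=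
  match χ with
  | Chi.kappa => kappa P
  | Chi.ht => ht P

/-- The gap program `P_g`: for each atom `a` occurring in `P`,
the rule `gap(Ka) ← Ka, not a`. -/
def Pg (P : Finset (Rule σ)) : Finset (Rule (Atom σ)) :=
  (progAtoms P).image (fun a => ⟨{Atom.gap a}, {Atom.K a}, {Atom.base a}⟩)

/-- `Π = P^χ ∪ P_g`. -/
def Pi' (χ : Chi) (P : Finset (Rule σ)) : Finset (Rule (Atom σ)) :=
  epi χ P ∪ Pg P

/-- The signature `Σ^κ = Σ ∪ {Ka : a ∈ Σ}` as a set of extended atoms. -/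
def SigmaK (σ : Type) : Set (Atom σ) :=
  Set.range Atom.base ∪ Set.range Atom.K

/-- The gap `𝒢(I) = {Ka : Ka ∈ I and a ∉ I}` of an interpretation. -/
def gapG (I : Set (Atom σ)) : Set (Atom σ) :=
  {x | ∃ a : σ, x = Atom.K a ∧ Atom.K a ∈ I ∧ Atom.base a ∉ I}

/-- Maximal canonical interpretations in `ℱ`. -/
def mc (F : Set (Set (Atom σ))) : Set (Set (Atom σ)) :=
  {I | I ∈ F ∧ ¬ ∃ J ∈ F, gapG J ⊂ gapG I}

/-- The semi-stable models of `P`. -/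
def SST (P : Finset (Rule σ)) : Set (Set (Atom σ)) :=
  {I | ∃ S ∈ mc (AS (kappa P)), I = S ∩ SigmaK σ}

/-- The semi-equilibrium models of `P`. -/
def SEQ (P : Finset (Rule σ)) : Set (Set (Atom σ)) :=
  {I | ∃ S ∈ mc (AS (ht P)), I = S ∩ SigmaK σ}

/-- The paracoherent semantics selected by `χ`. -/
def PSem (χ : Chi) (P : Finset (Rule σ)) : Set (Set (Atom σ)) :=
  match χ with
  | Chi.kappa => SST P
  | Chi.ht => SEQ P

/-- `M` is a paracoherent answer set of `P` (w.r.t. `χ`): `M` is an answer set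
of `Π = P^χ ∪ P_g` and `M ∩ Σ^κ ∈ SST(P)` (resp. `SEQ(P)`). -/
def paracoherent (χ : Chi) (P : Finset (Rule σ)) (M : Set (Atom σ)) : Prop :=
  M ∈ AS (Pi' χ P) ∧ M ∩ SigmaK σ ∈ PSem χ P

/-- `gap(I) = {gap(Ka) : a occurs in P and gap(Ka) ∈ I}`. -/
def gapSet (P : Finset (Rule σ)) (I : Set (Atom σ)) : Set (Atom σ) :=
  {x | ∃ a ∈ progAtoms P, x = Atom.gap a ∧ Atom.gap a ∈ I}

open Classical in
/-- `gap(I)` as a finite set (used for counting violated weak constraints). -/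
noncomputable def gapFin (P : Finset (Rule σ)) (I : Set (Atom σ)) :
    Finset (Atom σ) :=
  ((progAtoms P).image Atom.gap).filter (· ∈ I)

open Classical in
/-- The constraints `Π_M`: the constraint whose positive body is `gap(M)`,
plus, for each gap atom occurring in `Π` but not in `M`, the constraint
forbidding it. -/
noncomputable def PiM (P : Finset (Rule σ)) (M : Set (Atom σ)) :
    Finset (Rule (Atom σ)) :=
  {⟨∅, gapFin P M, ∅⟩}
  ∪ ((progAtoms P).filter (fun a => Atom.gap a ∉ M)).image
      (fun a => ⟨(∅ : Finset (Atom σ)), {Atom.gap a}, ∅⟩)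

/-- `M` is an optimum answer set of `Π ∪ W`, where `W` is the set of weak
constraints `↝ gap(Ka)` for `a ∈ At(P)`: an answer set of `Π` minimizing the
number `|gap(M)|` of violated weak constraints. -/
def optimum (χ : Chi) (P : Finset (Rule σ)) (M : Set (Atom σ)) : Prop :=
  M ∈ AS (Pi' χ P) ∧
    ∀ M' ∈ AS (Pi' χ P), (gapFin P M).card ≤ (gapFin P M').card

section Aux

variable {α : Type} [DecidableEq α]

lemma reduct_union (A B : Finset (Rule α)) (I : Set α) :
    reduct (A ∪ B) I = reduct A I ∪ reduct B I := by
  classical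
  ext r
  simp only [reduct, Finset.mem_union, Finset.mem_image, Finset.mem_filter]
  aesop

lemma reduct_of_neg_empty (C : Finset (Rule α)) (I : Set α)
    (h : ∀ r ∈ C, r.neg = ∅) : reduct C I = C := by
  classical
  ext r
  simp only [reduct, Finset.mem_image, Finset.mem_filter]
  constructor
  · rintro ⟨s, ⟨hs, -⟩, rfl⟩
    have := h s hs
    obtain ⟨h1, h2, h3⟩ := s
    simp_all
  · intro hr
    refine ⟨r, ⟨hr, by simp [h r hr]⟩, ?_⟩
    have := h _ hr
    obtain ⟨h1, h2, h3⟩ := r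
    simp_all

lemma isModel_union (X Y : Finset (Rule α)) (I : Set α) :
    isModel I (X ∪ Y) ↔ isModel I X ∧ isModel I Y := by
  simp [isModel, Finset.mem_union, or_imp, forall_and]

lemma isModel_mono_constraints (C : Finset (Rule α)) {J M : Set α}
    (hJM : J ⊆ M) (hC : ∀ r ∈ C, r.head = ∅ ∧ r.neg = ∅)
    (hM : isModel M C) : isModel J C := by
  intro r hr
  obtain ⟨hh, hn⟩ := hC r hr
  rintro ⟨hp, -⟩
  have := hM r hr ⟨fun x hx => hJM (hp hx), by simp [hn]⟩
  simp [hh] at this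

lemma AS_union_constraints (Q C : Finset (Rule α))
    (hC : ∀ r ∈ C, r.head = ∅ ∧ r.neg = ∅) (M : Set α) :
    M ∈ AS (Q ∪ C) ↔ M ∈ AS Q ∧ isModel M C := by
  have hred : reduct (Q ∪ C) M = reduct Q M ∪ C := by
    rw [reduct_union, reduct_of_neg_empty C M (fun r hr => (hC r hr).2)]
  simp only [AS, Set.mem_setOf_eq, isMinModel, hred, isModel_union]
  constructor
  · rintro ⟨⟨hmodQ, hmodC⟩, hmin⟩
    refine ⟨⟨hmodQ, ?_⟩, hmodC⟩
    intro J hJ hJmod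
    exact hmin J hJ ⟨hJmod, isModel_mono_constraints C hJ.subset hC hmodC⟩
  · rintro ⟨⟨hmodQ, hmin⟩, hmodC⟩
    refine ⟨⟨hmodQ, hmodC⟩, ?_⟩
    intro J hJ hJmod
    exact hmin J hJ hJmod.1

end Aux

section Aux2

variable {σ : Type} [DecidableEq σ]

lemma PiM_constraints (P : Finset (Rule σ)) (M : Set (Atom σ)) :
    ∀ r ∈ PiM P M, r.head = ∅ ∧ r.neg = ∅ := by
  intro r hr
  simp only [PiM, Finset.mem_union, Finset.mem_singleton, Finset.mem_image] at hr
  rcases hr with rfl | ⟨a, -, rfl⟩ <;> exact ⟨rfl, rfl⟩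

lemma mem_gapFin (P : Finset (Rule σ)) (M : Set (Atom σ)) (x : Atom σ) :
    x ∈ gapFin P M ↔ ∃ a ∈ progAtoms P, x = Atom.gap a ∧ Atom.gap a ∈ M := by
  classical
  simp only [gapFin, Finset.mem_filter, Finset.mem_image]
  constructor
  · rintro ⟨⟨a, ha, rfl⟩, hx⟩; exact ⟨a, ha, rfl, hx⟩
  · rintro ⟨a, ha, rfl, hx⟩; exact ⟨⟨a, ha, rfl⟩, hx⟩

lemma isModel_PiM (P : Finset (Rule σ)) (M M' : Set (Atom σ)) :
    isModel M' (PiM P M) ↔ gapSet P M' ⊂ gapSet P M := by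
  classical
  constructor
  · intro h
    have h0 : ¬ (↑(gapFin P M) : Set (Atom σ)) ⊆ M' := by
      intro hsub
      have := h ⟨∅, gapFin P M, ∅⟩ (by simp [PiM]) ⟨hsub, by simp⟩
      simp at this
    have h1 : ∀ a ∈ progAtoms P, Atom.gap a ∉ M → Atom.gap a ∉ M' := by
      intro a ha hnm hm'
      have hr : (⟨∅, {Atom.gap a}, ∅⟩ : Rule (Atom σ)) ∈ PiM P M := by
        simp only [PiM, Finset.mem_union, Finset.mem_image, Finset.mem_filter]
        exact Or.inr ⟨a, ⟨ha, hnm⟩, rfl⟩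
      have := h _ hr ⟨by simpa using hm', by simp⟩
      simp at this
    have hsub : gapSet P M' ⊆ gapSet P M := by
      rintro x ⟨a, ha, rfl, hx⟩
      by_cases hm : Atom.gap a ∈ M
      · exact ⟨a, ha, rfl, hm⟩
      · exact absurd hx (h1 a ha hm)
    refine ⟨hsub, fun hsup => h0 ?_⟩
    intro x hx
    rw [Finset.mem_coe, mem_gapFin] at hx
    obtain ⟨a, ha, rfl, hm⟩ := hx
    obtain ⟨_, _, heq, hx'⟩ := hsup ⟨a, ha, rfl, hm⟩
    cases heq
    exact hx'
  · intro h
    obtain ⟨hsub, hnsup⟩ := h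
    intro r hr
    simp only [PiM, Finset.mem_union, Finset.mem_singleton, Finset.mem_image,
      Finset.mem_filter] at hr
    rcases hr with rfl | ⟨a, ⟨ha, hnm⟩, rfl⟩
    · rintro ⟨hp, -⟩
      exfalso
      apply hnsup
      rintro x ⟨a, ha, rfl, hm⟩
      have : Atom.gap a ∈ M' := hp (by rw [Finset.mem_coe, mem_gapFin]; exact ⟨a, ha, rfl, hm⟩)
      exact ⟨a, ha, rfl, this⟩
    · rintro ⟨hp, -⟩
      exfalso
      have hm' : Atom.gap a ∈ M' := hp (by simp)
      obtain ⟨_, _, heq, hx'⟩ := hsub ⟨a, ha, rfl, hm'⟩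
      cases heq
      exact hnm hx'

end Aux2

end ASP

open ASP in
/-- For an answer set `M` of `Π = P^χ ∪ P_g`,
`AS(Π ∪ Π_M) = {M' ∈ AS(Π) : gap(M') ⊊ gap(M)}`. -/
theorem stmt6 {σ : Type} [DecidableEq σ] [Countable σ] [Infinite σ]
    (P : Finset (Rule σ)) (χ : Chi) (M : Set (Atom σ))
    (hM : M ∈ AS (Pi' χ P)) :
    AS (Pi' χ P ∪ PiM P M) =
      {M' ∈ AS (Pi' χ P) | gapSet P M' ⊂ gapSet P M} := by
  ext M'
  rw [Set.mem_setOf_eq, AS_union_constraints _ _ (PiM_constraints P M), isModel_PiM]
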